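/- arXiv:2211.07013 — 2 statements merged into one kernel-verified Lean document; each statement's English description precedes it below -/
import Mathlib

section
/- The function S(k,r) defined as the value at r of the solution of f''+kf=0, f(0)=0, f'(0)=1, i.e. S(k,r) = sin(√k r)/√k for k>0, S(k,r)=r for k=0, S(k,r)=sinh(√(-k) r)/√(-k) for k<0, is jointly smooth (C^∞) in (k,r) ∈ ℝ × ℝ. -/
/-- The solution of the Jacobi equation `f'' + k f = 0`, `f 0 = 0`, `f' 0 = 1`. -/
noncomputable def jacobiSol (k r : ℝ) : ℝ :=
  if 0 < k then Real.sin (Real.sqrt k * r) / Real.sqrt k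
  else if k = 0 then r
  else Real.sinh (Real.sqrt (-k) * r) / Real.sqrt (-k)

open FormalMultilinearSeries Filter Nat

/-- Coefficients of the entire function `u ↦ ∑ uⁿ/(2n+1)!`. -/
noncomputable def jacobiCoeff (n : ℕ) : ℝ := (1 : ℝ) / ((2 * n + 1)! : ℝ)

/-- The entire function `u ↦ ∑ uⁿ/(2n+1)!`, so that `S(k,r) = r * f(-k r²)`. -/
noncomputable def jacobiAux : ℝ → ℝ := ofScalarsSum jacobiCoeff

lemma jacobiCoeff_ne (n : ℕ) : jacobiCoeff n ≠ 0 := by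
  simp [jacobiCoeff, Nat.factorial_ne_zero]

lemma jacobiRadius : (ofScalars ℝ jacobiCoeff).radius = ⊤ := by
  apply ofScalars_radius_eq_top_of_tendsto ℝ jacobiCoeff
    (Eventually.of_forall jacobiCoeff_ne)
  have h : ∀ n : ℕ, ‖jacobiCoeff (n + 1)‖ / ‖jacobiCoeff n‖ =
      1 / ((2 * n + 2) * (2 * n + 3)) := by
    intro n
    have h1 : (2 * (n + 1) + 1)! = (2 * n + 1)! * ((2 * n + 2) * (2 * n + 3)) := by
      have : 2 * (n + 1) + 1 = (2 * n + 2) + 1 := by ring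
      rw [this, Nat.factorial_succ]
      have : 2 * n + 2 = (2 * n + 1) + 1 := by ring
      rw [this, Nat.factorial_succ]
      ring
    have f1 : (0:ℝ) < (2 * n + 1)! := by positivity
    rw [jacobiCoeff, jacobiCoeff, h1]
    push_cast
    rw [Real.norm_eq_abs, Real.norm_eq_abs, abs_of_pos (by positivity),
      abs_of_pos (by positivity)]
    field_simp
  simp only [h]
  have : Tendsto (fun n : ℕ => ((2 * n + 2) * (2 * n + 3) : ℝ)) atTop atTop := by
    apply Tendsto.atTop_mul_atTop₀ <;>
      exact tendsto_atTop_add_const_right _ _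
        ((tendsto_natCast_atTop_atTop).const_mul_atTop (by norm_num))
  simpa using this.inv_tendsto_atTop.congr (fun n => (one_div _).symm)

lemma jacobiAux_contDiff : ContDiff ℝ (⊤ : ℕ∞) jacobiAux := by
  have h := (ofScalars ℝ jacobiCoeff).hasFPowerSeriesOnBall
    (by rw [jacobiRadius]; exact ENNReal.zero_lt_top)
  apply AnalyticOnNhd.contDiff (fun x _ => ?_)
  have hx : x ∈ Metric.eball (0:ℝ) (ofScalars ℝ jacobiCoeff).radius := by
    rw [jacobiRadius]; simp
  exact h.analyticAt_of_mem (by simpa using hx)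

lemma jacobiAux_eq (u : ℝ) : jacobiAux u = ∑' n : ℕ, u ^ n / ((2 * n + 1)! : ℝ) := by
  rw [jacobiAux, ofScalars_sum_eq]
  exact tsum_congr fun n => by rw [jacobiCoeff, smul_eq_mul]; ring

lemma jacobiAux_sin (t : ℝ) : t * jacobiAux (-(t ^ 2)) = Real.sin t := by
  rw [jacobiAux_eq, Real.sin_eq_tsum, ← tsum_mul_left]
  exact tsum_congr fun n => by
    rw [neg_pow, ← pow_mul]
    ring

lemma jacobiAux_sinh (t : ℝ) : t * jacobiAux (t ^ 2) = Real.sinh t := by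
  rw [jacobiAux_eq, Real.sinh_eq_tsum, ← tsum_mul_left]
  exact tsum_congr fun n => by
    rw [← pow_mul]
    ring

lemma jacobiSol_eq (k r : ℝ) : jacobiSol k r = r * jacobiAux (-(k * r ^ 2)) := by
  unfold jacobiSol
  rcases lt_trichotomy k 0 with hk | hk | hk
  · rw [if_neg (by linarith), if_neg (by linarith)]
    have hs : (0:ℝ) < Real.sqrt (-k) := Real.sqrt_pos.mpr (by linarith)
    have ht : (Real.sqrt (-k) * r) ^ 2 = -(k * r ^ 2) := by
      rw [mul_pow, Real.sq_sqrt (by linarith)]; ring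
    rw [← jacobiAux_sinh (Real.sqrt (-k) * r), ht]
    field_simp
  · subst hk
    rw [if_neg (lt_irrefl 0), if_pos rfl]
    have : jacobiAux 0 = 1 := by
      rw [jacobiAux_eq]
      rw [tsum_eq_single 0 (fun n hn => by
        simp [zero_pow hn])]
      simp
    simp [this]
  · rw [if_pos hk]
    have hs : (0:ℝ) < Real.sqrt k := Real.sqrt_pos.mpr hk
    have ht : -((Real.sqrt k * r) ^ 2) = -(k * r ^ 2) := by
      rw [mul_pow, Real.sq_sqrt hk.le]
    rw [← jacobiAux_sin (Real.sqrt k * r), ht]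
    field_simp

/-- The function `(k, r) ↦ S_k(r)` is jointly smooth on `ℝ × ℝ`. -/
theorem jacobiSol_contDiff :
    ContDiff ℝ (⊤ : ℕ∞) (fun p : ℝ × ℝ => jacobiSol p.1 p.2) := by
  have : (fun p : ℝ × ℝ => jacobiSol p.1 p.2)
      = fun p : ℝ × ℝ => p.2 * jacobiAux (-(p.1 * p.2 ^ 2)) := by
    funext p; exact jacobiSol_eq p.1 p.2
  rw [this]
  exact contDiff_snd.mul
    (jacobiAux_contDiff.comp ((contDiff_fst.mul (contDiff_snd.pow 2)).neg))
end

section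
/- (Rigidity of conformal flatness for BCCCM, analytic core) Let k : I → ℝ be smooth and let S(t,r) = S_{k(t)}(r), where S_κ(r) = ∑_{n≥0} (-κ)^n r^{2n+1}/(2n+1)!. If S(t,r)·∂ₜ²S(t,r) = (∂ₜS(t,r))² for all (t,r) ∈ I × (0,∞) (restricted to the domain where S > 0), then k is constant on I. -/
open Filter Topology

noncomputable def psum (b : ℕ → ℝ) (x : ℝ) : ℝ := ∑' n, b n * x ^ n

def dcoef (b : ℕ → ℝ) : ℕ → ℝ := fun n => (n + 1 : ℝ) * b (n + 1)

lemma dcoef_bound {b : ℕ → ℝ} (hb : ∀ n, |b n| ≤ 1 / (n.factorial : ℝ)) :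
    ∀ n, |dcoef b n| ≤ 1 / (n.factorial : ℝ) := by
  intro n
  have h := hb (n + 1)
  have hpos : (0:ℝ) < (n.factorial : ℝ) := by positivity
  have : |dcoef b n| = ((n:ℝ) + 1) * |b (n+1)| := by
    rw [dcoef, abs_mul, abs_of_nonneg (by positivity)]
  rw [this]
  have h2 : ((n:ℝ) + 1) * |b (n+1)| ≤ ((n:ℝ) + 1) * (1 / ((n+1).factorial : ℝ)) := by
    apply mul_le_mul_of_nonneg_left h (by positivity)
  refine h2.trans (le_of_eq ?_)
  rw [Nat.factorial_succ]
  push_cast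
  field_simp

lemma psum_summable {b : ℕ → ℝ} (hb : ∀ n, |b n| ≤ 1 / (n.factorial : ℝ)) (x : ℝ) :
    Summable (fun n => b n * x ^ n) := by
  apply Summable.of_norm
  refine Summable.of_nonneg_of_le (fun n => norm_nonneg _) (fun n => ?_)
    (Real.summable_pow_div_factorial |x|)
  rw [Real.norm_eq_abs, abs_mul, abs_pow]
  calc |b n| * |x| ^ n ≤ (1 / (n.factorial : ℝ)) * |x| ^ n := by
        apply mul_le_mul_of_nonneg_right (hb n) (by positivity)
    _ = |x| ^ n / (n.factorial : ℝ) := by ring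

lemma psum_hasDerivAt {b : ℕ → ℝ} (hb : ∀ n, |b n| ≤ 1 / (n.factorial : ℝ)) (x : ℝ) :
    HasDerivAt (psum b) (psum (dcoef b) x) x := by
  set R : ℝ := |x| + 1 with hR
  have hRpos : 0 < R := by positivity
  set u : ℕ → ℝ := fun n => (n : ℝ) * R ^ (n - 1) / (n.factorial : ℝ) with hu
  have husum : Summable u := by
    rw [← summable_nat_add_iff 1]
    have : (fun n => u (n + 1)) = fun n => R ^ n / (n.factorial : ℝ) := by
      funext n
      have : ((n+1 : ℕ) : ℝ) ≠ 0 := by positivity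
      simp only [hu, Nat.add_sub_cancel, Nat.factorial_succ]
      push_cast
      field_simp
    rw [this]
    exact Real.summable_pow_div_factorial R
  have hgd : ∀ n : ℕ, ∀ y : ℝ, y ∈ Metric.ball (0:ℝ) R →
      HasDerivAt (fun z => b n * z ^ n) (b n * ((n:ℝ) * y ^ (n - 1))) y := by
    intro n y _
    exact (hasDerivAt_pow n y).const_mul (b n)
  have hbound : ∀ n : ℕ, ∀ y : ℝ, y ∈ Metric.ball (0:ℝ) R →
      ‖b n * ((n:ℝ) * y ^ (n - 1))‖ ≤ u n := by
    intro n y hy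
    rw [Metric.mem_ball, dist_zero_right, Real.norm_eq_abs] at hy
    rw [Real.norm_eq_abs, abs_mul, abs_mul, abs_pow, Nat.abs_cast]
    calc |b n| * ((n:ℝ) * |y| ^ (n-1))
        ≤ (1 / (n.factorial : ℝ)) * ((n:ℝ) * R ^ (n-1)) := by
          apply mul_le_mul (hb n) ?_ (by positivity) (by positivity)
          exact mul_le_mul_of_nonneg_left
            (pow_le_pow_left₀ (abs_nonneg y) hy.le _) (by positivity)
      _ = u n := by rw [hu]; ring
  have hsum0 : Summable (fun n => b n * (0:ℝ) ^ n) := psum_summable hb 0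
  have hmem : x ∈ Metric.ball (0:ℝ) R := by
    rw [Metric.mem_ball, dist_zero_right, Real.norm_eq_abs]; linarith
  have h0mem : (0:ℝ) ∈ Metric.ball (0:ℝ) R := by
    rw [Metric.mem_ball, dist_self]; exact hRpos
  have H := hasDerivAt_tsum_of_isPreconnected husum Metric.isOpen_ball
    (convex_ball (0:ℝ) R).isPreconnected hgd hbound h0mem hsum0 hmem
  have hsum' : Summable (fun n => b n * ((n:ℝ) * x ^ (n-1))) := by
    apply Summable.of_norm
    exact Summable.of_nonneg_of_le (fun n => norm_nonneg _)
      (fun n => hbound n x hmem) husum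
  have : (∑' n, b n * ((n:ℝ) * x ^ (n - 1))) = psum (dcoef b) x := by
    rw [Summable.tsum_eq_zero_add hsum']
    simp only [Nat.cast_zero, Nat.cast_add, Nat.cast_one, Nat.add_sub_cancel, pow_zero]
    rw [psum]
    simp only [zero_mul, mul_zero, zero_add]
    exact tsum_congr fun n => by rw [dcoef]; ring
  rw [this] at H
  exact H

lemma psum_zero {b : ℕ → ℝ} : psum b 0 = b 0 := by
  rw [psum, tsum_eq_single 0]
  · simp
  · intro n hn; simp [zero_pow hn]


/-- The Jacobi solution `S_κ` realized as an everywhere-convergent power series: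
`S_κ(r) = ∑ (-κ)^n r^(2n+1)/(2n+1)!`. -/
noncomputable def jacobiSeries (κ r : ℝ) : ℝ :=
  ∑' n : ℕ, (-κ) ^ n * r ^ (2 * n + 1) / (Nat.factorial (2 * n + 1) : ℝ)

noncomputable def bf : ℕ → ℝ := fun n => (-1) ^ n / ((2 * n + 1).factorial : ℝ)

lemma bf_bound : ∀ n, |bf n| ≤ 1 / (n.factorial : ℝ) := by
  intro n
  have h1 : |bf n| = 1 / (((2 * n + 1).factorial : ℕ) : ℝ) := by
    rw [bf, abs_div, abs_pow, abs_neg, abs_one, one_pow, abs_of_nonneg (by positivity)]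
  rw [h1]
  apply one_div_le_one_div_of_le (by positivity)
  exact_mod_cast Nat.factorial_le (by omega)

noncomputable def jf : ℝ → ℝ := psum bf
noncomputable def jf1 : ℝ → ℝ := psum (dcoef bf)
noncomputable def jf2 : ℝ → ℝ := psum (dcoef (dcoef bf))

lemma jf_zero : jf 0 = 1 := by rw [jf, psum_zero]; simp [bf]
lemma jf1_zero : jf1 0 = -(1/6) := by
  rw [jf1, psum_zero, dcoef]
  norm_num [bf, Nat.factorial]
lemma jf2_zero : jf2 0 = 1/60 := by
  rw [jf2, psum_zero, dcoef, dcoef]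
  norm_num [bf, Nat.factorial]

lemma jacobi_eq (κ r : ℝ) : jacobiSeries κ r = r * jf (κ * r ^ 2) := by
  rw [jacobiSeries, jf, psum, ← tsum_mul_left]
  apply tsum_congr
  intro n
  rw [bf, neg_pow, mul_pow, pow_add, pow_mul, pow_one]
  ring

lemma jf_hasDerivAt (x : ℝ) : HasDerivAt jf (jf1 x) x := psum_hasDerivAt bf_bound x
lemma jf1_hasDerivAt (x : ℝ) : HasDerivAt jf1 (jf2 x) x :=
  psum_hasDerivAt (dcoef_bound bf_bound) x
lemma jf2_cont (x : ℝ) : ContinuousAt jf2 x :=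
  (psum_hasDerivAt (dcoef_bound (dcoef_bound bf_bound)) x).continuousAt

/-- (Rigidity of conformal flatness for BCCCM, analytic core.) If `k` is smooth on an open
interval and `S(t,r) = S_{k(t)}(r)` satisfies `S ∂ₜ²S = (∂ₜS)²` for all `t` in the interval
and `r > 0` in the domain where `S > 0`, then `k` is constant. -/
theorem curvature_const_of_conformally_flat (a b : ℝ) (k : ℝ → ℝ)
    (hk : ContDiffOn ℝ (⊤ : ℕ∞) k (Set.Ioo a b))
    (hconf : ∀ t ∈ Set.Ioo a b, ∀ r : ℝ, 0 < r → 0 < jacobiSeries (k t) r →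
      jacobiSeries (k t) r * deriv (fun s => deriv (fun u => jacobiSeries (k u) r) s) t
        = (deriv (fun s => jacobiSeries (k s) r) t) ^ 2) :
    ∀ t ∈ Set.Ioo a b, ∀ t' ∈ Set.Ioo a b, k t = k t' := by
  have hopen : IsOpen (Set.Ioo a b) := isOpen_Ioo
  have hkdiff : ∀ s ∈ Set.Ioo a b, DifferentiableAt ℝ k s := fun s hs =>
    (hk.contDiffAt (hopen.mem_nhds hs)).differentiableAt (by simp)
  have hk1 : ContDiffOn ℝ (⊤ : ℕ∞) (deriv k) (Set.Ioo a b) := hk.deriv_of_isOpen hopen (by simp)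
  have hdkdiff : ∀ s ∈ Set.Ioo a b, DifferentiableAt ℝ (deriv k) s := fun s hs =>
    (hk1.contDiffAt (hopen.mem_nhds hs)).differentiableAt (by simp)
  -- inner derivative formula
  have hinner : ∀ r : ℝ, ∀ s ∈ Set.Ioo a b,
      HasDerivAt (fun u => jacobiSeries (k u) r)
        (r * (jf1 (k s * r ^ 2) * (deriv k s * r ^ 2))) s := by
    intro r s hs
    have hks : HasDerivAt k (deriv k s) s := (hkdiff s hs).hasDerivAt
    have h1 : HasDerivAt (fun u => k u * r ^ 2) (deriv k s * r ^ 2) s := hks.mul_const _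
    have h3 : HasDerivAt (fun u => jf (k u * r ^ 2))
        (jf1 (k s * r ^ 2) * (deriv k s * r ^ 2)) s :=
      (jf_hasDerivAt (k s * r ^ 2)).comp s h1
    have h4 := h3.const_mul r
    have : (fun u => jacobiSeries (k u) r) = fun u => r * jf (k u * r ^ 2) := by
      funext u; exact jacobi_eq _ _
    rw [this]
    exact h4
  -- main per-point claim: deriv k = 0 on Ioo
  have hzero : ∀ t ∈ Set.Ioo a b, deriv k t = 0 := by
    intro t ht
    set κ := k t with hκ
    set K' := deriv k t with hK'
    set K'' := deriv (deriv k) t with hK''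
    -- outer derivative
    have houter : ∀ r : ℝ,
        deriv (fun s => deriv (fun u => jacobiSeries (k u) r) s) t
          = r * ((jf2 (κ * r ^ 2) * (K' * r ^ 2)) * (K' * r ^ 2)
              + jf1 (κ * r ^ 2) * (K'' * r ^ 2)) := by
      intro r
      have heq : (fun s => deriv (fun u => jacobiSeries (k u) r) s)
          =ᶠ[𝓝 t] (fun s => r * (jf1 (k s * r ^ 2) * (deriv k s * r ^ 2))) := by
        filter_upwards [hopen.mem_nhds ht] with s hs
        exact (hinner r s hs).deriv
      rw [heq.deriv_eq]
      have hks : HasDerivAt k K' t := (hkdiff t ht).hasDerivAt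
      have h1 : HasDerivAt (fun u => k u * r ^ 2) (K' * r ^ 2) t := hks.mul_const _
      have hp : HasDerivAt (fun s => jf1 (k s * r ^ 2))
          (jf2 (κ * r ^ 2) * (K' * r ^ 2)) t := (jf1_hasDerivAt (κ * r ^ 2)).comp t h1
      have hq : HasDerivAt (fun s => deriv k s * r ^ 2) (K'' * r ^ 2) t :=
        ((hdkdiff t ht).hasDerivAt).mul_const _
      have := ((hp.mul hq).const_mul r).deriv
      rw [← this]
      rfl
    -- the identity, in the useful shape
    have hkey : ∀ r : ℝ, 0 < r → 0 < jf (κ * r ^ 2) →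
        jf (κ * r ^ 2) * (K'' * jf1 (κ * r ^ 2))
          = r ^ 2 * (K' ^ 2 * (jf1 (κ * r ^ 2) ^ 2 - jf (κ * r ^ 2) * jf2 (κ * r ^ 2))) := by
      intro r hr hf
      have hpos : 0 < jacobiSeries κ r := by rw [jacobi_eq]; positivity
      have E := hconf t ht r hr hpos
      rw [houter r, (hinner r t ht).deriv, jacobi_eq] at E
      have hr4 : (r : ℝ) ^ 4 ≠ 0 := by positivity
      apply mul_left_cancel₀ hr4
      rw [← hκ] at E
      linear_combination E
    -- limits
    have hx0 : Tendsto (fun r : ℝ => κ * r ^ 2) (𝓝[>] 0) (𝓝 0) := by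
      have h : Continuous (fun r : ℝ => κ * r ^ 2) := by continuity
      have h2 := h.tendsto (0 : ℝ)
      simp only [mul_zero, ne_eq, OfNat.ofNat_ne_zero, not_false_eq_true, zero_pow] at h2
      exact h2.mono_left nhdsWithin_le_nhds
    have hTf : Tendsto (fun r : ℝ => jf (κ * r ^ 2)) (𝓝[>] 0) (𝓝 1) := by
      have := ((jf_hasDerivAt 0).continuousAt.tendsto).comp hx0
      rwa [jf_zero] at this
    have hTf1 : Tendsto (fun r : ℝ => jf1 (κ * r ^ 2)) (𝓝[>] 0) (𝓝 (-(1/6))) := by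
      have := ((jf1_hasDerivAt 0).continuousAt.tendsto).comp hx0
      rwa [jf1_zero] at this
    have hTf2 : Tendsto (fun r : ℝ => jf2 (κ * r ^ 2)) (𝓝[>] 0) (𝓝 (1/60)) := by
      have := ((jf2_cont 0).tendsto).comp hx0
      rwa [jf2_zero] at this
    have hfpos : ∀ᶠ r in 𝓝[>] (0:ℝ), 0 < jf (κ * r ^ 2) :=
      hTf.eventually (eventually_gt_nhds (by norm_num : (0:ℝ) < 1))
    have hrpos : ∀ᶠ r in 𝓝[>] (0:ℝ), 0 < r := eventually_mem_nhdsWithin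
    have hEv : ∀ᶠ r in 𝓝[>] (0:ℝ),
        jf (κ * r ^ 2) * (K'' * jf1 (κ * r ^ 2))
          = r ^ 2 * (K' ^ 2 * (jf1 (κ * r ^ 2) ^ 2 - jf (κ * r ^ 2) * jf2 (κ * r ^ 2))) := by
      filter_upwards [hfpos, hrpos] with r hf hr
      exact hkey r hr hf
    -- first limit : K'' = 0
    have T1 : Tendsto (fun r : ℝ => jf (κ * r ^ 2) * (K'' * jf1 (κ * r ^ 2)))
        (𝓝[>] 0) (𝓝 (1 * (K'' * -(1/6)))) := hTf.mul (tendsto_const_nhds.mul hTf1)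
    have T2 : Tendsto (fun r : ℝ => r ^ 2 *
          (K' ^ 2 * (jf1 (κ * r ^ 2) ^ 2 - jf (κ * r ^ 2) * jf2 (κ * r ^ 2))))
        (𝓝[>] 0) (𝓝 (0 ^ 2 * (K' ^ 2 * ((-(1/6)) ^ 2 - 1 * (1/60))))) := by
      refine Tendsto.mul ?_ (tendsto_const_nhds.mul (((hTf1.pow 2).sub (hTf.mul hTf2))))
      exact ((continuous_pow 2).tendsto (0:ℝ)).mono_left nhdsWithin_le_nhds
    have hK''0 : K'' = 0 := by
      have := tendsto_nhds_unique (T1.congr' hEv) T2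
      nlinarith [this]
    -- second limit : K' = 0
    have hEv2 : ∀ᶠ r in 𝓝[>] (0:ℝ),
        K' ^ 2 * (jf1 (κ * r ^ 2) ^ 2 - jf (κ * r ^ 2) * jf2 (κ * r ^ 2)) = 0 := by
      filter_upwards [hEv, hrpos] with r hE hr
      rw [hK''0] at hE
      have hr2 : (r:ℝ) ^ 2 ≠ 0 := by positivity
      have hE' : r ^ 2 * (K' ^ 2 * (jf1 (κ * r ^ 2) ^ 2 - jf (κ * r ^ 2) * jf2 (κ * r ^ 2))) = 0 := by
        rw [← hE]; ring
      rcases mul_eq_zero.mp hE' with h | h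
      · exact absurd h hr2
      · exact h
    have T3 : Tendsto (fun r : ℝ =>
          K' ^ 2 * (jf1 (κ * r ^ 2) ^ 2 - jf (κ * r ^ 2) * jf2 (κ * r ^ 2)))
        (𝓝[>] 0) (𝓝 (K' ^ 2 * ((-(1/6)) ^ 2 - 1 * (1/60)))) :=
      tendsto_const_nhds.mul ((hTf1.pow 2).sub (hTf.mul hTf2))
    have hK'0 : K' = 0 := by
      have T4 : Tendsto (fun r : ℝ =>
            K' ^ 2 * (jf1 (κ * r ^ 2) ^ 2 - jf (κ * r ^ 2) * jf2 (κ * r ^ 2)))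
          (𝓝[>] 0) (𝓝 0) :=
        (tendsto_const_nhds : Tendsto (fun _ : ℝ => (0:ℝ)) (𝓝[>] 0) (𝓝 0)).congr'
          (hEv2.mono fun r h => h.symm)
      have := tendsto_nhds_unique T3 T4
      nlinarith [this]
    exact hK'0
  -- conclude constancy
  intro t ht t' ht'
  apply (convex_Ioo a b).is_const_of_fderivWithin_eq_zero
    (hk.differentiableOn (by simp)) ?_ ht ht'
  intro x hx
  have h0 : HasFDerivAt k (0 : ℝ →L[ℝ] ℝ) x := by
    have h := (hkdiff x hx).hasDerivAt
    rw [hzero x hx] at h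
    have hz : ContinuousLinearMap.smulRight (1 : ℝ →L[ℝ] ℝ) (0:ℝ) = 0 := by
      ext; simp
    rw [← hz]
    exact h.hasFDerivAt
  rw [fderivWithin_of_isOpen hopen hx]
  exact h0.fderiv
end
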